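/- Progress for StackLang with failure: every configuration ⟨H; S; P⟩ with nonempty program P and S not of the form Fail c steps to some configuration, where otherwise stuck precondition violations are covered by the dynamic type-error rules stepping to a Fail Type configuration. -/
import Mathlib


/-- Error codes. -/
inductive ErrCode
  | type | idx | conv
deriving DecidableEq

mutual
/-- StackLang values: numbers, thunks (suspended programs), locations, and
arrays of values.  (Variables occur only transiently, before substitution.) -/
inductive Val
  | num (n : ℤ)
  | thunk (P : List Instr)
  | loc (ℓ : ℕ)
  | arr (vs : List Val)
  | var (x : ℕ)

/-- StackLang instructions. -/
inductive Instr
  | push (v : Val)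
  | add
  | less
  | if0 (P1 P2 : List Instr)
  | lam (x : ℕ) (P : List Instr)
  | call
  | idx
  | len
  | alloc
  | read
  | write
  | fail (c : ErrCode)
end

mutual
/-- Substitution of a value for a variable, in values. -/
def substV (x : ℕ) (u : Val) : Val → Val
  | .num n => .num n
  | .thunk P => .thunk (substP x u P)
  | .loc l => .loc l
  | .arr vs => .arr (substVs x u vs)
  | .var y => if y = x then u else .var y

def substVs (x : ℕ) (u : Val) : List Val → List Val
  | [] => []
  | v :: vs => substV x u v :: substVs x u vs

/-- Substitution in instructions. -/
def substI (x : ℕ) (u : Val) : Instr → Instr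
  | .push v => .push (substV x u v)
  | .add => .add
  | .less => .less
  | .if0 P1 P2 => .if0 (substP x u P1) (substP x u P2)
  | .lam y P => if y = x then .lam y P else .lam y (substP x u P)
  | .call => .call
  | .idx => .idx
  | .len => .len
  | .alloc => .alloc
  | .read => .read
  | .write => .write
  | .fail c => .fail c

/-- Substitution in programs. -/
def substP (x : ℕ) (u : Val) : List Instr → List Instr
  | [] => []
  | i :: P => substI x u i :: substP x u P
end

/-- Heaps: finite maps from locations to values. -/
abbrev Heap := Finmap (fun _ : ℕ => Val)

/-- Stacks: a list of values (head = top of stack) or a failure marker. -/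
inductive Stack
  | ok (vs : List Val)
  | fail (c : ErrCode)

/-- Configurations `⟨H; S; P⟩`. -/
structure Config where
  H : Heap
  S : Stack
  P : List Instr

/-- The StackLang small-step operational semantics, including the dynamic
type-error rules (which step to a `fail Type` program when an instruction's
stack precondition is unmet).  `push` applies only when the stack is not a
failure marker; `alloc` deterministically chooses the least fresh location. -/
inductive Step : Config → Config → Prop
  | push {H S v P} :
      Step ⟨H, .ok S, .push v :: P⟩ ⟨H, .ok (v :: S), P⟩
  | add {H n n' S P} :
      Step ⟨H, .ok (.num n' :: .num n :: S), .add :: P⟩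
           ⟨H, .ok (.num (n + n') :: S), P⟩
  | addErr {H S P} : (∀ n n' S', S ≠ .num n' :: .num n :: S') →
      Step ⟨H, .ok S, .add :: P⟩ ⟨H, .ok S, [.fail .type]⟩
  | less {H n n' S P} :
      Step ⟨H, .ok (.num n' :: .num n :: S), .less :: P⟩
           ⟨H, .ok (.num (if n < n' then 0 else 1) :: S), P⟩
  | lessErr {H S P} : (∀ n n' S', S ≠ .num n' :: .num n :: S') →
      Step ⟨H, .ok S, .less :: P⟩ ⟨H, .ok S, [.fail .type]⟩
  | if0T {H S P1 P2 P} :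
      Step ⟨H, .ok (.num 0 :: S), .if0 P1 P2 :: P⟩ ⟨H, .ok S, P1 ++ P⟩
  | if0F {H n S P1 P2 P} : n ≠ 0 →
      Step ⟨H, .ok (.num n :: S), .if0 P1 P2 :: P⟩ ⟨H, .ok S, P2 ++ P⟩
  | if0Err {H S P1 P2 P} : (∀ (n : ℤ) S', S ≠ .num n :: S') →
      Step ⟨H, .ok S, .if0 P1 P2 :: P⟩ ⟨H, .ok S, [.fail .type]⟩
  | lam {H v S x P1 P} :
      Step ⟨H, .ok (v :: S), .lam x P1 :: P⟩ ⟨H, .ok S, substP x v P1 ++ P⟩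
  | lamErr {H x P1 P} :
      Step ⟨H, .ok [], .lam x P1 :: P⟩ ⟨H, .ok [], [.fail .type]⟩
  | call {H P1 S P} :
      Step ⟨H, .ok (.thunk P1 :: S), .call :: P⟩ ⟨H, .ok S, P1 ++ P⟩
  | callErr {H S P} : (∀ P1 S', S ≠ .thunk P1 :: S') →
      Step ⟨H, .ok S, .call :: P⟩ ⟨H, .ok S, [.fail .type]⟩
  | idxIn {H n vs S P} (h1 : 0 ≤ n) (h2 : n.toNat < vs.length) :
      Step ⟨H, .ok (.num n :: .arr vs :: S), .idx :: P⟩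
           ⟨H, .ok (vs.getD n.toNat (.num 0) :: S), P⟩
  | idxOut {H n vs S P} : ¬ (0 ≤ n ∧ n.toNat < vs.length) →
      Step ⟨H, .ok (.num n :: .arr vs :: S), .idx :: P⟩
           ⟨H, .ok (.num n :: .arr vs :: S), [.fail .idx]⟩
  | idxErr {H S P} : (∀ (n : ℤ) vs S', S ≠ .num n :: .arr vs :: S') →
      Step ⟨H, .ok S, .idx :: P⟩ ⟨H, .ok S, [.fail .type]⟩
  | len {H vs S P} :
      Step ⟨H, .ok (.arr vs :: S), .len :: P⟩
           ⟨H, .ok (.num (vs.length : ℤ) :: S), P⟩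
  | lenErr {H S P} : (∀ vs S', S ≠ .arr vs :: S') →
      Step ⟨H, .ok S, .len :: P⟩ ⟨H, .ok S, [.fail .type]⟩
  | alloc {H ℓ v S P} : ℓ ∉ H → (∀ ℓ' < ℓ, ℓ' ∈ H) →
      Step ⟨H, .ok (v :: S), .alloc :: P⟩
           ⟨H.insert ℓ v, .ok (.loc ℓ :: S), P⟩
  | allocErr {H P} :
      Step ⟨H, .ok [], .alloc :: P⟩ ⟨H, .ok [], [.fail .type]⟩
  | read {H ℓ v S P} : H.lookup ℓ = some v →
      Step ⟨H, .ok (.loc ℓ :: S), .read :: P⟩ ⟨H, .ok (v :: S), P⟩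
  | readErr {H S P} : (¬ ∃ ℓ v S', S = .loc ℓ :: S' ∧ H.lookup ℓ = some v) →
      Step ⟨H, .ok S, .read :: P⟩ ⟨H, .ok S, [.fail .type]⟩
  | write {H ℓ v S P} : ℓ ∈ H →
      Step ⟨H, .ok (v :: .loc ℓ :: S), .write :: P⟩ ⟨H.insert ℓ v, .ok S, P⟩
  | writeErr {H S P} : (¬ ∃ v ℓ S', S = v :: .loc ℓ :: S' ∧ ℓ ∈ H) →
      Step ⟨H, .ok S, .write :: P⟩ ⟨H, .ok S, [.fail .type]⟩
  | failI {H S c P} :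
      Step ⟨H, .ok S, .fail c :: P⟩ ⟨H, .fail c, []⟩


lemma exists_fresh (H : Heap) : ∃ ℓ, ℓ ∉ H ∧ ∀ ℓ' < ℓ, ℓ' ∈ H := by
  classical
  have hne : ∃ n, n ∉ H := by
    refine ⟨H.keys.sup id + 1, fun hmem => ?_⟩
    have := Finset.le_sup (f := id) (Finmap.mem_keys.mpr hmem)
    simp only [id] at this
    omega
  refine ⟨Nat.find hne, Nat.find_spec hne, fun l hl => ?_⟩
  by_contra h
  exact Nat.find_min hne hl h

/-- Progress with failure: every configuration with a nonempty program and a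
non-failure stack steps (unmet stack preconditions are covered by the dynamic
type-error rules). -/
theorem progress (H : Heap) (S : Stack) (P : List Instr)
    (hP : P ≠ []) (hS : ∀ c, S ≠ .fail c) :
    ∃ C', Step ⟨H, S, P⟩ C' := by
  classical
  cases S with
  | fail c => exact absurd rfl (hS c)
  | ok vs =>
    cases P with
    | nil => exact absurd rfl hP
    | cons i P =>
      cases i with
      | push v => exact ⟨_, Step.push⟩
      | add =>
        by_cases h : ∃ n n' S', vs = Val.num n' :: Val.num n :: S'
        · obtain ⟨n, n', S', rfl⟩ := h; exact ⟨_, Step.add⟩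
        · exact ⟨_, Step.addErr fun n n' S' hh => h ⟨n, n', S', hh⟩⟩
      | less =>
        by_cases h : ∃ n n' S', vs = Val.num n' :: Val.num n :: S'
        · obtain ⟨n, n', S', rfl⟩ := h; exact ⟨_, Step.less⟩
        · exact ⟨_, Step.lessErr fun n n' S' hh => h ⟨n, n', S', hh⟩⟩
      | if0 P1 P2 =>
        by_cases h : ∃ (n : ℤ), ∃ S', vs = Val.num n :: S'
        · obtain ⟨n, S', rfl⟩ := h
          by_cases hn : n = 0
          · subst hn; exact ⟨_, Step.if0T⟩
          · exact ⟨_, Step.if0F hn⟩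
        · exact ⟨_, Step.if0Err fun n S' hh => h ⟨n, S', hh⟩⟩
      | lam x P1 =>
        cases vs with
        | nil => exact ⟨_, Step.lamErr⟩
        | cons v S' => exact ⟨_, Step.lam⟩
      | call =>
        by_cases h : ∃ P1 S', vs = Val.thunk P1 :: S'
        · obtain ⟨P1, S', rfl⟩ := h; exact ⟨_, Step.call⟩
        · exact ⟨_, Step.callErr fun P1 S' hh => h ⟨P1, S', hh⟩⟩
      | idx =>
        by_cases h : ∃ (n : ℤ), ∃ ws S', vs = Val.num n :: Val.arr ws :: S'
        · obtain ⟨n, ws, S', rfl⟩ := h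
          by_cases hb : 0 ≤ n ∧ n.toNat < ws.length
          · exact ⟨_, Step.idxIn hb.1 hb.2⟩
          · exact ⟨_, Step.idxOut hb⟩
        · exact ⟨_, Step.idxErr fun n ws S' hh => h ⟨n, ws, S', hh⟩⟩
      | len =>
        by_cases h : ∃ ws S', vs = Val.arr ws :: S'
        · obtain ⟨ws, S', rfl⟩ := h; exact ⟨_, Step.len⟩
        · exact ⟨_, Step.lenErr fun ws S' hh => h ⟨ws, S', hh⟩⟩
      | alloc =>
        cases vs with
        | nil => exact ⟨_, Step.allocErr⟩
        | cons v S' =>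
          obtain ⟨ℓ, h1, h2⟩ := exists_fresh H
          exact ⟨_, Step.alloc h1 h2⟩
      | read =>
        by_cases h : ∃ ℓ v S', vs = Val.loc ℓ :: S' ∧ H.lookup ℓ = some v
        · obtain ⟨ℓ, v, S', rfl, hv⟩ := h; exact ⟨_, Step.read hv⟩
        · exact ⟨_, Step.readErr h⟩
      | write =>
        by_cases h : ∃ v ℓ S', vs = v :: Val.loc ℓ :: S' ∧ ℓ ∈ H
        · obtain ⟨v, ℓ, S', rfl, hm⟩ := h; exact ⟨_, Step.write hm⟩
        · exact ⟨_, Step.writeErr h⟩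
      | fail c => exact ⟨_, Step.failI⟩
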